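/- The symmetric closure of directed branching apartness coincides with branching apartness: for all states p, q in an LTS with reflexive silent steps, p #_b q holds if and only if p #⃗ q or q #⃗ p, where #⃗ is directed branching apartness. -/
import Mathlib


variable {X A : Type*}

/-- The reflexive transitive closure of the silent step relation (`none` is τ). -/
def TauStar (step : Option A → X → X → Prop) : X → X → Prop :=
  Relation.ReflTransGen (step none)

/-- `Q` is closed under the uniform branching apartness rule (with `α` ranging over
all actions, including τ) and is symmetric. -/
def IsBApartURel (step : Option A → X → X → Prop) (Q : X → X → Prop) : Prop :=
  (∀ p q, Q p q → Q q p) ∧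
  (∀ (α : Option A) (p p' q : X), step α p p' →
    (∀ q' q'', TauStar step q q' → step α q' q'' → Q p q' ∨ Q p' q'') → Q p q)

/-- The least symmetric relation closed under the uniform rule. -/
def BApartU (step : Option A → X → X → Prop) (p q : X) : Prop :=
  ∀ Q : X → X → Prop, IsBApartURel step Q → Q p q

/-- `Q` is a directed branching apartness relation. -/
def IsDBApartRel (step : Option A → X → X → Prop) (Q : X → X → Prop) : Prop :=
  ∀ (α : Option A) (p p' q : X), step α p p' →
    (∀ q' q'', Relation.ReflTransGen (step none) q q' → step α q' q'' →
      Q p q' ∨ Q p' q'' ∨ Q q'' p') → Q p q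

/-- Directed branching apartness: the least directed branching apartness relation. -/
def DBApart (step : Option A → X → X → Prop) (p q : X) : Prop :=
  ∀ Q : X → X → Prop, IsDBApartRel step Q → Q p q

section Aux

variable (step : Option A → X → X → Prop)

/-- `DBApart` is itself closed under the directed rule. -/
lemma dbApart_isRel : IsDBApartRel step (DBApart step) := by
  intro α p p' q hstep hmatch Q hQ
  apply hQ α p p' q hstep
  intro q' q'' h1 h2
  rcases hmatch q' q'' h1 h2 with h | h | h
  · exact Or.inl (h Q hQ)
  · exact Or.inr (Or.inl (h Q hQ))
  · exact Or.inr (Or.inr (h Q hQ))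

/-- Coinduction principle for the complement of `DBApart`. -/
lemma coindC {R : X → X → Prop}
    (hR : ∀ (α : Option A) (a a' b : X), R a b → step α a a' →
      ∃ b' b'', Relation.ReflTransGen (step none) b b' ∧ step α b' b'' ∧
        R a b' ∧ R a' b'' ∧ R b'' a') :
    ∀ a b, R a b → ¬ DBApart step a b := by
  intro a b hab hD
  refine hD (fun x y => ¬ R x y) ?_ hab
  intro α p p' q hstep hmatch hRpq
  obtain ⟨q', q'', h1, h2, h3, h4, h5⟩ := hR α p p' q hRpq hstep
  rcases hmatch q' q'' h1 h2 with h | h | h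
  · exact h h3
  · exact h h4
  · exact h h5

/-- Unfolding of the complement of `DBApart`: it is a directed branching simulation. -/
lemma unfoldC {p q : X} (hC : ¬ DBApart step p q) {α : Option A} {p' : X}
    (hstep : step α p p') :
    ∃ q' q'', Relation.ReflTransGen (step none) q q' ∧ step α q' q'' ∧
      ¬ DBApart step p q' ∧ ¬ DBApart step p' q'' ∧ ¬ DBApart step q'' p' := by
  by_contra h
  apply hC
  apply dbApart_isRel step α p p' q hstep
  intro q' q'' h1 h2
  by_contra h3
  push_neg at h3
  exact h ⟨q', q'', h1, h2, h3.1, h3.2.1, h3.2.2⟩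

/-- Stuttering: the complement of `DBApart` can follow τ-chains, reaching a
mutually related state. Uses τ-reflexivity. -/
lemma stutterC (htau : ∀ x : X, step none x x) {q p q1 : X}
    (hC : ¬ DBApart step q p) (h : Relation.ReflTransGen (step none) q q1) :
    ∃ p1, Relation.ReflTransGen (step none) p p1 ∧
      ¬ DBApart step q1 p1 ∧ ¬ DBApart step p1 q1 := by
  induction h with
  | refl =>
    obtain ⟨p', p'', h1, h2, _, h4, h5⟩ := unfoldC step hC (htau q)
    exact ⟨p'', h1.tail h2, h4, h5⟩
  | tail _ hbc ih =>
    obtain ⟨p2, hp2, hC2, _⟩ := ih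
    obtain ⟨p', p'', h1, h2, _, h4, h5⟩ := unfoldC step hC2 hbc
    exact ⟨p'', (hp2.trans h1).tail h2, h4, h5⟩

/-- The complement of `DBApart` is preserved along τ-chains on the left. -/
lemma cTau (htau : ∀ x : X, step none x x) {q p q1 : X}
    (hC : ¬ DBApart step q p) (h : Relation.ReflTransGen (step none) q q1) :
    ¬ DBApart step q1 p := by
  refine coindC step
    (R := fun y x => ¬ DBApart step y x ∨
      ∃ q0, ¬ DBApart step q0 x ∧ Relation.ReflTransGen (step none) q0 y)
    ?_ q1 p (Or.inr ⟨q, hC, h⟩)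
  intro α a a' b hab hstep
  rcases hab with h0 | ⟨q0, hq0, hq0t⟩
  · obtain ⟨b', b'', h1, h2, h3, h4, h5⟩ := unfoldC step h0 hstep
    exact ⟨b', b'', h1, h2, Or.inl h3, Or.inl h4, Or.inl h5⟩
  · obtain ⟨x1, hx1, hCa, _⟩ := stutterC step htau hq0 hq0t
    obtain ⟨b', b'', h1, h2, h3, h4, h5⟩ := unfoldC step hCa hstep
    exact ⟨b', b'', hx1.trans h1, h2, Or.inl h3, Or.inl h4, Or.inl h5⟩

lemma bApartU_symm {p q : X} (h : BApartU step p q) : BApartU step q p := by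
  intro Q hQ
  have hflip : IsBApartURel step (fun a b => Q b a) := by
    refine ⟨fun a b hab => hQ.1 b a hab, ?_⟩
    intro α p p' q hstep H
    apply hQ.1
    apply hQ.2 α p p' q hstep
    intro q' q'' h1 h2
    rcases H q' q'' h1 h2 with h | h
    · exact Or.inl (hQ.1 _ _ h)
    · exact Or.inr (hQ.1 _ _ h)
  exact h (fun a b => Q b a) hflip

/-- `BApartU` is a directed branching apartness relation. -/
lemma bApartU_isDB : IsDBApartRel step (BApartU step) := by
  intro α p p' q hstep H Q hQ
  apply hQ.2 α p p' q hstep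
  intro q' q'' h1 h2
  rcases H q' q'' h1 h2 with h | h | h
  · exact Or.inl (h Q hQ)
  · exact Or.inr (h Q hQ)
  · exact Or.inr (hQ.1 _ _ (h Q hQ))

end Aux

theorem bApart_iff_dbApart_symmClosure (step : Option A → X → X → Prop)
    (htau : ∀ p : X, step none p p) (p q : X) :
    BApartU step p q ↔ (DBApart step p q ∨ DBApart step q p) := by
  constructor
  · intro h
    apply h (fun a b => DBApart step a b ∨ DBApart step b a)
    refine ⟨fun a b hab => hab.symm, ?_⟩
    intro α p p' q hstep H
    by_cases hqp : DBApart step q p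
    · exact Or.inr hqp
    · left
      apply dbApart_isRel step α p p' q hstep
      intro q' q'' h1 h2
      rcases H q' q'' h1 h2 with (h | h) | (h | h)
      · exact Or.inl h
      · exact absurd h (cTau step htau hqp h1)
      · exact Or.inr (Or.inl h)
      · exact Or.inr (Or.inr h)
  · rintro (h | h)
    · exact h (BApartU step) (bApartU_isDB step)
    · exact bApartU_symm step (h (BApartU step) (bApartU_isDB step))
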